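/- For every nonnegative integer ν, the sum ∑_{n ≤ x} Λ(n)(log n)^ν / n equals (log x)^{ν+1}/(ν+1) + O((log x)^ν) as x → ∞. Precisely, there is a constant K > 0 such that for all x ≥ 2, |∑_{n ≤ x} Λ(n)(log n)^ν / n − (log x)^{ν+1}/(ν+1)| ≤ K (log x)^ν. -/

import Mathlib

open Real Finset ArithmeticFunction MeasureTheory

lemma divisors_eq_filter {n N : ℕ} (h1 : 1 ≤ n) (h2 : n ≤ N) :
    n.divisors = (Finset.Icc 1 N).filter (· ∣ n) := by
  ext d
  simp only [Nat.mem_divisors, Finset.mem_filter, Finset.mem_Icc]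
  constructor
  · rintro ⟨hd, hn0⟩
    exact ⟨⟨Nat.one_le_iff_ne_zero.mpr fun h => by simp [h] at hd; omega,
      (Nat.le_of_dvd (by omega) hd).trans h2⟩, hd⟩
  · rintro ⟨_, hd⟩
    exact ⟨hd, by omega⟩

lemma hyperbola (N : ℕ) :
    ∑ n ∈ Finset.Icc 1 N, Real.log n
      = ∑ d ∈ Finset.Icc 1 N, ArithmeticFunction.vonMangoldt d * (N / d : ℕ) := by
  have h1 : ∀ n ∈ Finset.Icc 1 N, Real.log n
      = ∑ d ∈ Finset.Icc 1 N, if d ∣ n then ArithmeticFunction.vonMangoldt d else 0 := by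
    intro n hn
    simp only [Finset.mem_Icc] at hn
    rw [← Finset.sum_filter, ← divisors_eq_filter hn.1 hn.2, vonMangoldt_sum]
  rw [Finset.sum_congr rfl h1, Finset.sum_comm]
  refine Finset.sum_congr rfl fun d hd => ?_
  rw [← Finset.sum_filter, Finset.sum_const, show Finset.Icc 1 N = Finset.Ioc 0 N from rfl,
    Nat.Ioc_filter_dvd_card_eq_div, nsmul_eq_mul, mul_comm]

lemma log_monotoneOn (a b : ℕ) (ha : 1 ≤ a) : MonotoneOn Real.log (Set.Icc (a:ℝ) (b:ℝ)) := by
  intro x hx y hy hxy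
  have : (1:ℝ) ≤ a := by exact_mod_cast ha
  exact Real.log_le_log (by simp only [Set.mem_Icc] at hx; linarith) hxy

lemma integral_log_nat (N : ℕ) (hN : 1 ≤ N) :
    ∫ t in (1:ℝ)..(N:ℝ), Real.log t = N * Real.log N - N + 1 := by
  rw [integral_log]
  simp

lemma sum_log_lower (N : ℕ) (hN : 1 ≤ N) :
    (N:ℝ) * Real.log N - N + 1 ≤ ∑ n ∈ Finset.Icc 1 N, Real.log n := by
  have h := (log_monotoneOn 1 N le_rfl).integral_le_sum_Ico (by exact_mod_cast hN)
  rw [Nat.cast_one, integral_log_nat N hN] at h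
  refine h.trans (le_of_eq ?_)
  have h2 : ∑ i ∈ Finset.Ico 1 N, Real.log ((i:ℕ) + 1 : ℕ)
      = ∑ i ∈ Finset.Ico 2 (N+1), Real.log i := by
    rw [← Finset.sum_Ico_add' (fun i => Real.log (i:ℕ)) 1 N 1]
  push_cast at h2 ⊢
  rw [h2, show Finset.Ico 2 (N+1) = Finset.Icc 2 N from Finset.Ico_add_one_right_eq_Icc 2 N,
    show Finset.Icc 2 N = Finset.Ioc 1 N from (Finset.Icc_add_one_left_eq_Ioc 1 N),
    Finset.Icc_eq_cons_Ioc hN, Finset.sum_cons]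
  simp

lemma sum_log_upper (N : ℕ) (hN : 1 ≤ N) :
    ∑ n ∈ Finset.Icc 1 N, Real.log n ≤ (N:ℝ) * Real.log N - N + 1 + Real.log N := by
  have h := (log_monotoneOn 1 N le_rfl).sum_le_integral_Ico (by exact_mod_cast hN)
  rw [Nat.cast_one, integral_log_nat N hN] at h
  have h2 : ∑ n ∈ Finset.Icc 1 N, Real.log n
      = (∑ i ∈ Finset.Ico 1 N, Real.log i) + Real.log N := by
    rw [← Finset.Ico_add_one_right_eq_Icc 1 N, Finset.sum_Ico_succ_top hN]
  rw [h2]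
  linarith

lemma theta_le (N : ℕ) :
    ∑ p ∈ (Finset.Icc 1 N).filter Nat.Prime, ArithmeticFunction.vonMangoldt p ≤ 3 * N := by
  have hset : (Finset.Icc 1 N).filter Nat.Prime = (Finset.range (N+1)).filter Nat.Prime := by
    ext p
    simp only [Finset.mem_filter, Finset.mem_Icc, Finset.mem_range]
    constructor
    · rintro ⟨⟨h1, h2⟩, hp⟩; exact ⟨by omega, hp⟩
    · rintro ⟨h, hp⟩; exact ⟨⟨hp.one_lt.le.trans' (by norm_num), by omega⟩, hp⟩
  rw [hset]
  have h1 : ∀ p ∈ (Finset.range (N+1)).filter Nat.Prime,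
      ArithmeticFunction.vonMangoldt p = Real.log p := fun p hp =>
    vonMangoldt_apply_prime (Finset.mem_filter.mp hp).2
  rw [Finset.sum_congr rfl h1, ← Real.log_prod (fun p hp =>
    Nat.cast_ne_zero.mpr (Finset.mem_filter.mp hp).2.pos.ne')]
  have h2 : (∏ p ∈ (Finset.range (N+1)).filter Nat.Prime, (p:ℝ)) = (primorial N : ℕ) := by
    rw [primorial]; push_cast; rfl
  rw [h2]
  calc Real.log (primorial N : ℕ) ≤ Real.log ((4:ℕ)^N : ℕ) := by
        apply Real.log_le_log (by exact_mod_cast primorial_pos N)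
        exact_mod_cast primorial_le_4_pow N
    _ = N * Real.log 4 := by push_cast; rw [Real.log_pow]
    _ ≤ N * 3 := by
        have := Real.log_le_sub_one_of_pos (show (0:ℝ) < 4 by norm_num)
        nlinarith [Nat.cast_nonneg (α := ℝ) N]
    _ = 3 * N := by ring

-- card of non-prime prime powers up to N
lemma card_pp (N : ℕ) :
    ((Finset.Icc 1 N).filter (fun n => ¬ n.Prime ∧ IsPrimePow n)).card
      ≤ Nat.sqrt N * (Nat.log 2 N + 1) := by
  classical
  have := Finset.card_le_card_of_injOn
    (f := fun n => (n.minFac, n.factorization n.minFac))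
    (s := (Finset.Icc 1 N).filter (fun n => ¬ n.Prime ∧ IsPrimePow n))
    (t := (Finset.Icc 1 (Nat.sqrt N)) ×ˢ (Finset.Icc 0 (Nat.log 2 N)))
    ?_ ?_
  · calc _ ≤ _ := this
      _ = (Nat.sqrt N) * (Nat.log 2 N + 1) := by
          simp [Finset.card_product, Nat.card_Icc]
  · rintro n hn
    simp only [Finset.coe_filter, Set.mem_setOf_eq, Finset.mem_Icc] at hn
    obtain ⟨⟨h1, h2⟩, hnp, hpp⟩ := hn
    obtain ⟨p, k, hp, hk, rfl⟩ := (isPrimePow_nat_iff _).mp hpp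
    have hk2 : 2 ≤ k := by
      by_contra h
      push_neg at h
      interval_cases k
      exact absurd hp (by simpa [pow_one] using hnp)
    dsimp only
    rw [hp.pow_minFac hk.ne', hp.factorization_pow, Finsupp.single_eq_same]
    simp only [Finset.mem_coe, Finset.mem_product, Finset.mem_Icc]
    refine ⟨⟨hp.one_lt.le.trans' (by norm_num), ?_⟩, ⟨Nat.zero_le _, ?_⟩⟩
    · rw [Nat.le_sqrt]
      calc p * p = p ^ 2 := (sq p).symm
        _ ≤ p ^ k := Nat.pow_le_pow_right hp.pos hk2
        _ ≤ N := h2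
    · refine (Nat.le_log_iff_pow_le one_lt_two (by omega)).mpr ?_
      calc 2 ^ k ≤ p ^ k := Nat.pow_le_pow_left hp.two_le k
        _ ≤ N := h2
  · rintro n1 hn1 n2 hn2 heq
    simp only [Finset.coe_filter, Set.mem_setOf_eq, Finset.mem_Icc] at hn1 hn2
    obtain ⟨_, _, hpp1⟩ := hn1
    obtain ⟨_, _, hpp2⟩ := hn2
    obtain ⟨p1, k1, hp1, hk1, rfl⟩ := (isPrimePow_nat_iff _).mp hpp1
    obtain ⟨p2, k2, hp2, hk2, rfl⟩ := (isPrimePow_nat_iff _).mp hpp2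
    dsimp only at heq
    rw [hp1.pow_minFac hk1.ne', hp1.factorization_pow, Finsupp.single_eq_same,
      hp2.pow_minFac hk2.ne', hp2.factorization_pow, Finsupp.single_eq_same] at heq
    rw [(Prod.mk.injEq _ _ _ _).mp heq |>.1, (Prod.mk.injEq _ _ _ _).mp heq |>.2]

lemma psi_le (N : ℕ) :
    ∑ n ∈ Finset.Icc 1 N, ArithmeticFunction.vonMangoldt n ≤ 40 * N := by
  rcases Nat.eq_zero_or_pos N with rfl | hN
  · simp
  classical
  rw [← Finset.sum_filter_add_sum_filter_not (Finset.Icc 1 N) Nat.Prime]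
  have hE : ∑ n ∈ (Finset.Icc 1 N).filter (fun n => ¬ n.Prime),
      ArithmeticFunction.vonMangoldt n ≤ 37 * N := by
    have step : ∑ n ∈ (Finset.Icc 1 N).filter (fun n => ¬ n.Prime),
        ArithmeticFunction.vonMangoldt n
        ≤ ∑ n ∈ (Finset.Icc 1 N).filter (fun n => ¬ n.Prime),
          (if IsPrimePow n then Real.log N else 0) := by
      refine Finset.sum_le_sum fun n hn => ?_
      simp only [Finset.mem_filter, Finset.mem_Icc] at hn
      by_cases hpp : IsPrimePow n
      · rw [if_pos hpp]
        exact vonMangoldt_le_log.trans (Real.log_le_log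
          (by exact_mod_cast hn.1.1) (by exact_mod_cast hn.1.2))
      · rw [if_neg hpp, vonMangoldt_eq_zero_iff.mpr hpp]
    rw [← Finset.sum_filter, Finset.filter_filter, Finset.sum_const, nsmul_eq_mul] at step
    have hcard := card_pp N
    have hL : Real.log N ≤ 4 * (N:ℝ) ^ ((4:ℝ)⁻¹) := by
      have := Real.log_le_rpow_div (Nat.cast_nonneg N) (show (0:ℝ) < 4⁻¹ by norm_num)
      calc Real.log N ≤ (N:ℝ) ^ ((4:ℝ)⁻¹) / 4⁻¹ := this
        _ = 4 * (N:ℝ) ^ ((4:ℝ)⁻¹) := by ring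
    set L := Real.log N with hLdef
    set r := (N:ℝ) ^ ((4:ℝ)⁻¹) with hrdef
    set s := Real.sqrt N with hsdef
    have hN1 : (1:ℝ) ≤ N := by exact_mod_cast hN
    have hrr : r * r = s := by
      rw [hrdef, hsdef, ← Real.rpow_add (by linarith), Real.sqrt_eq_rpow]
      norm_num
    have hss : s * s = N := Real.mul_self_sqrt (by linarith)
    have hr1 : (1:ℝ) ≤ r := Real.one_le_rpow hN1 (by norm_num)
    have hrs : r ≤ s := by nlinarith
    have hL0 : 0 ≤ L := Real.log_natCast_nonneg N
    have hsqrt : (Nat.sqrt N : ℝ) ≤ s := Real.nat_sqrt_le_real_sqrt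
    have hlog2 : (Nat.log 2 N : ℝ) * Real.log 2 ≤ L := by
      have h1 : (Nat.log 2 N : ℝ) ≤ Real.logb 2 N := Real.natLog_le_logb N 2
      have h2 : Real.logb 2 N = L / Real.log 2 := rfl
      have h3 : (0:ℝ) < Real.log 2 := Real.log_pos (by norm_num)
      rw [h2] at h1
      calc (Nat.log 2 N : ℝ) * Real.log 2 ≤ L / Real.log 2 * Real.log 2 := by
            exact mul_le_mul_of_nonneg_right h1 h3.le
        _ = L := div_mul_cancel₀ L h3.ne'
    have hlog2' : (0.6931471803 : ℝ) < Real.log 2 := Real.log_two_gt_d9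
    have hnl : (Nat.log 2 N : ℝ) ≤ 2 * L := by nlinarith [Nat.cast_nonneg (α := ℝ) (Nat.log 2 N)]
    refine step.trans ?_
    have hcard' : ((Finset.Icc 1 N).filter (fun n => ¬ n.Prime ∧ IsPrimePow n)).card
        ≤ (Nat.sqrt N : ℝ) * ((Nat.log 2 N : ℝ) + 1) := by exact_mod_cast hcard
    have hs0 : (0:ℝ) ≤ s := Real.sqrt_nonneg _
    calc (((Finset.Icc 1 N).filter (fun n => ¬ n.Prime ∧ IsPrimePow n)).card : ℝ) * L
        ≤ (s * ((2*L) + 1)) * L := by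
          apply mul_le_mul_of_nonneg_right _ hL0
          refine hcard'.trans ?_
          apply mul_le_mul hsqrt (by linarith) (by positivity) hs0
      _ = 2 * (s * L * L) + s * L := by ring
      _ ≤ 2 * (s * (4*r) * (4*r)) + s * (4*r) := by
          nlinarith [mul_nonneg hs0 (mul_nonneg (by linarith : (0:ℝ) ≤ 4*r - L) (by linarith : (0:ℝ) ≤ 4*r + L)), mul_nonneg hs0 (by linarith : (0:ℝ) ≤ 4*r - L)]
      _ = 32 * (s * (r * r)) + 4 * (s * r) := by ring
      _ ≤ 32 * (s * s) + 4 * (s * s) := by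
          nlinarith [mul_nonneg hs0 (by linarith : (0:ℝ) ≤ s - r)]
      _ = 36 * N := by rw [hss]; ring
      _ ≤ 37 * N := by nlinarith
  have hT := theta_le N
  linarith

lemma mertens (x : ℝ) (hx : 1 ≤ x) :
    |(∑ n ∈ Finset.Icc 1 ⌊x⌋₊, ArithmeticFunction.vonMangoldt n / n) - Real.log x| ≤ 81 := by
  have hN1 : 1 ≤ ⌊x⌋₊ := Nat.one_le_floor_iff x |>.mpr hx
  have hNx : (⌊x⌋₊:ℝ) ≤ x := Nat.floor_le (by linarith)
  have hxN : x < ⌊x⌋₊ + 1 := Nat.lt_floor_add_one x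
  have hx0 : (0:ℝ) < x := by linarith
  have hN0 : (0:ℝ) < ⌊x⌋₊ := by exact_mod_cast hN1
  obtain ⟨N, hNdef⟩ : ∃ N, ⌊x⌋₊ = N := ⟨_, rfl⟩
  rw [hNdef] at hN1 hNx hxN hN0 ⊢
  set S := ∑ n ∈ Finset.Icc 1 N, ArithmeticFunction.vonMangoldt n / (n:ℝ) with hSdef
  have hxS : x * S = ∑ d ∈ Finset.Icc 1 N, ArithmeticFunction.vonMangoldt d * (x / d) := by
    rw [hSdef, Finset.mul_sum]
    exact Finset.sum_congr rfl fun d _ => by ring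
  have hdiv_ub : ∀ d ∈ Finset.Icc 1 N, ((N / d : ℕ) : ℝ) ≤ x / d := by
    intro d hd
    simp only [Finset.mem_Icc] at hd
    have hd0 : (0:ℝ) < d := by exact_mod_cast hd.1
    calc ((N / d : ℕ) : ℝ) ≤ (N:ℝ) / d := Nat.cast_div_le
      _ ≤ x / d := by gcongr
  have hdiv_lb : ∀ d ∈ Finset.Icc 1 N, x / d - 2 ≤ ((N / d : ℕ) : ℝ) := by
    intro d hd
    simp only [Finset.mem_Icc] at hd
    have hd0 : (0:ℝ) < d := by exact_mod_cast hd.1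
    have hd1 : (1:ℝ) ≤ d := by exact_mod_cast hd.1
    have h : N < d * (N / d) + d := by
      have h1 := Nat.div_add_mod N d
      have h2 := Nat.mod_lt N (show 0 < d by omega)
      omega
    have h' : (N:ℝ) < d * ((N / d : ℕ) : ℝ) + d := by exact_mod_cast h
    rw [sub_le_iff_le_add, div_le_iff₀ hd0]
    nlinarith
  -- upper bound on x * S
  have hub : x * S ≤ (∑ n ∈ Finset.Icc 1 N, Real.log n)
      + 2 * ∑ n ∈ Finset.Icc 1 N, ArithmeticFunction.vonMangoldt n := by
    rw [hxS, hyperbola N, Finset.mul_sum, ← Finset.sum_add_distrib]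
    refine Finset.sum_le_sum fun d hd => ?_
    have h1 := hdiv_lb d hd
    have h2 : (0:ℝ) ≤ ArithmeticFunction.vonMangoldt d := vonMangoldt_nonneg
    nlinarith
  have hlb : (∑ n ∈ Finset.Icc 1 N, Real.log n) ≤ x * S := by
    rw [hxS, hyperbola N]
    refine Finset.sum_le_sum fun d hd => ?_
    have h1 := hdiv_ub d hd
    have h2 : (0:ℝ) ≤ ArithmeticFunction.vonMangoldt d := vonMangoldt_nonneg
    nlinarith
  have hTl := sum_log_lower N hN1
  have hTu := sum_log_upper N hN1
  have hψN := psi_le N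
  have hψ0 : (0:ℝ) ≤ ∑ n ∈ Finset.Icc 1 N, ArithmeticFunction.vonMangoldt n :=
    Finset.sum_nonneg fun n _ => vonMangoldt_nonneg
  -- comparisons of N log N with x log x
  have hlogN0 : (0:ℝ) ≤ Real.log N := Real.log_natCast_nonneg N
  have hlogN : Real.log N ≤ Real.log x := Real.log_le_log hN0 hNx
  have hlogx0 : 0 ≤ Real.log x := Real.log_nonneg hx
  have hcmp1 : (N:ℝ) * Real.log N ≤ x * Real.log x := mul_le_mul hNx hlogN hlogN0 hx0.le
  have hcmp2 : x * Real.log x ≤ (N:ℝ) * Real.log N + Real.log x + 1 := by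
    have hlog_ratio : Real.log x - Real.log N ≤ x / N - 1 := by
      rw [← Real.log_div hx0.ne' hN0.ne']
      exact Real.log_le_sub_one_of_pos (by positivity)
    have h2 : (N:ℝ) * (Real.log x - Real.log N) ≤ x - N := by
      have h3 := mul_le_mul_of_nonneg_left hlog_ratio hN0.le
      have hxdiv : (N:ℝ) * (x / N) = x := by field_simp
      calc (N:ℝ) * (Real.log x - Real.log N) ≤ (N:ℝ) * (x / N - 1) := h3
        _ = x - N := by rw [mul_sub, hxdiv, mul_one]
    have h1 : (x - (N:ℝ)) * Real.log x ≤ 1 * Real.log x :=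
      mul_le_mul_of_nonneg_right (by linarith) hlogx0
    nlinarith
  -- combine
  have hup : x * S ≤ x * Real.log x + Real.log x + 79 * x + 1 := by linarith
  have hlo : x * Real.log x - x - Real.log x ≤ x * S := by linarith
  have hlogx_le : Real.log x ≤ x := (Real.log_le_sub_one_of_pos hx0).trans (by linarith)
  rw [abs_le]
  constructor
  · have h : x * (-81) ≤ x * (S - Real.log x) := by nlinarith
    linarith [(mul_le_mul_iff_of_pos_left hx0).mp h]
  · have h : x * (S - Real.log x) ≤ x * 81 := by nlinarith
    linarith [(mul_le_mul_iff_of_pos_left hx0).mp h]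

lemma integral_pow_log (k : ℕ) {x : ℝ} (hx : 1 ≤ x) :
    ∫ t in Set.Ioc 1 x, ((k:ℝ)+1) * Real.log t ^ k * t⁻¹ = Real.log x ^ (k+1) := by
  rw [← intervalIntegral.integral_of_le hx]
  have h : ∀ t ∈ Set.uIcc (1:ℝ) x, HasDerivAt (fun t => Real.log t ^ (k+1))
      (((k:ℝ)+1) * Real.log t ^ k * t⁻¹) t := by
    intro t ht
    rw [Set.uIcc_of_le hx] at ht
    have ht0 : (0:ℝ) < t := lt_of_lt_of_le one_pos ht.1
    have := (Real.hasDerivAt_log ht0.ne').fun_pow (k+1)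
    simpa using this
  have hint : IntervalIntegrable (fun t => ((k:ℝ)+1) * Real.log t ^ k * t⁻¹)
      MeasureTheory.volume 1 x := by
    apply ContinuousOn.intervalIntegrable
    rw [Set.uIcc_of_le hx]
    have : ∀ t ∈ Set.Icc (1:ℝ) x, t ≠ 0 := fun t ht => by
      have := ht.1; intro h; rw [h] at this; linarith
    exact (continuousOn_const.mul ((Real.continuousOn_log.mono (fun t ht => this t ht)).pow k)).mul
      (continuousOn_inv₀.mono (fun t ht => this t ht))
  rw [intervalIntegral.integral_eq_sub_of_hasDerivAt h hint]
  simp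

lemma sum_Icc_one {M : ℕ} (h : ℕ → ℝ) (h0 : h 0 = 0) :
    ∑ k ∈ Finset.Icc 0 M, h k = ∑ k ∈ Finset.Icc 1 M, h k := by
  rw [show Finset.Icc 1 M = Finset.Ioc 0 M from Finset.Icc_add_one_left_eq_Ioc 0 M,
    Finset.Icc_eq_cons_Ioc (Nat.zero_le M), Finset.sum_cons, h0, zero_add]

theorem sum_vonMangoldt_logpow_div_asymptotic (ν : ℕ) :
    ∃ K : ℝ, 0 < K ∧ ∀ x : ℝ, 2 ≤ x →
      |(∑ n ∈ Finset.Icc 1 ⌊x⌋₊,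
          ArithmeticFunction.vonMangoldt n * (Real.log n) ^ ν / n)
          - (Real.log x) ^ (ν + 1) / (ν + 1)|
        ≤ K * (Real.log x) ^ ν := by
  refine ⟨162, by norm_num, fun x hx => ?_⟩
  have hx1 : (1:ℝ) ≤ x := by linarith
  have hL0 : 0 ≤ Real.log x := Real.log_nonneg hx1
  rcases ν with _ | q
  · simp only [pow_zero, mul_one, pow_one, Nat.cast_zero, zero_add, div_one]
    exact (mertens x hx1).trans (by norm_num)
  · -- ν = q + 1
    set c : ℕ → ℝ := fun n => ArithmeticFunction.vonMangoldt n / n with hcdef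
    set f : ℝ → ℝ := fun t => Real.log t ^ (q+1) with hfdef
    set g : ℝ → ℝ := fun t => ((q:ℝ)+1) * Real.log t ^ q * t⁻¹ with hgdef
    set S : ℝ → ℝ := fun t => ∑ k ∈ Finset.Icc 0 ⌊t⌋₊, c k with hSdef
    have hc0 : c 0 = 0 := by simp [hcdef]
    have hcnn : ∀ n, 0 ≤ c n := fun n => div_nonneg vonMangoldt_nonneg (Nat.cast_nonneg n)
    -- Mertens for S
    have hSm : ∀ t : ℝ, 1 ≤ t → |S t - Real.log t| ≤ 81 := by
      intro t ht
      show |(∑ k ∈ Finset.Icc 0 ⌊t⌋₊, c k) - Real.log t| ≤ 81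
      rw [sum_Icc_one c hc0]
      exact mertens t ht
    -- differentiability
    have hne : ∀ t : ℝ, 0 < t → t ≠ 0 := fun t ht => ht.ne'
    have hf_diff : ∀ t ∈ Set.Icc (1:ℝ) x, DifferentiableAt ℝ f t := by
      intro t ht
      exact (Real.differentiableAt_log (by have := ht.1; intro h; rw [h] at this; linarith)).pow _
    have hderiv : ∀ t : ℝ, 0 < t → deriv f t = g t := by
      intro t ht
      have h := ((Real.hasDerivAt_log ht.ne').fun_pow (q+1)).deriv
      rw [hfdef, hgdef]
      rw [h]
      push_cast
      ring_nf
    have hg_cont : ContinuousOn g (Set.Icc (1:ℝ) x) := by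
      have hne' : ∀ t ∈ Set.Icc (1:ℝ) x, t ≠ 0 := fun t ht => by
        have := ht.1; intro h; rw [h] at this; linarith
      exact (continuousOn_const.mul ((Real.continuousOn_log.mono hne').pow q)).mul
        (continuousOn_inv₀.mono hne')
    have hf_int : MeasureTheory.IntegrableOn (deriv f) (Set.Icc 1 x) := by
      refine (hg_cont.congr fun t ht => hderiv t (by have := ht.1; linarith)).integrableOn_Icc
    -- Abel summation
    have habel := sum_mul_eq_sub_integral_mul₀ (c := c) (f := f) hc0 x hf_diff hf_int
    -- rewrite goal sum
    have hgoal_sum : ∑ n ∈ Finset.Icc 1 ⌊x⌋₊,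
        ArithmeticFunction.vonMangoldt n * (Real.log n) ^ (q+1) / n
        = ∑ k ∈ Finset.Icc 0 ⌊x⌋₊, f k * c k := by
      rw [sum_Icc_one (fun k => f k * c k) (by simp [hc0])]
      exact Finset.sum_congr rfl fun n _ => by rw [hfdef, hcdef]; ring
    -- measurability & integrability
    have hS_mono : Monotone S := by
      intro t1 t2 h
      exact Finset.sum_le_sum_of_subset_of_nonneg
        (Finset.Icc_subset_Icc le_rfl (Nat.floor_le_floor h)) (fun i _ _ => hcnn i)
    have hS_meas : Measurable S := hS_mono.measurable
    have hg_meas : Measurable g :=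
      (measurable_const.mul (Real.measurable_log.pow_const q)).mul measurable_inv
    have hg_int : MeasureTheory.IntegrableOn g (Set.Ioc 1 x) :=
      hg_cont.integrableOn_Icc.mono_set Set.Ioc_subset_Icc_self
    have hglog_int : MeasureTheory.IntegrableOn (fun t => g t * Real.log t) (Set.Ioc 1 x) := by
      have hne' : ∀ t ∈ Set.Icc (1:ℝ) x, t ≠ 0 := fun t ht => by
        have := ht.1; intro h; rw [h] at this; linarith
      exact ((hg_cont.mul (Real.continuousOn_log.mono hne')).integrableOn_Icc).mono_set
        Set.Ioc_subset_Icc_self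
    have hSx_nn : 0 ≤ S x := Finset.sum_nonneg fun i _ => hcnn i
    have hg0 : ∀ t ∈ Set.Ioc (1:ℝ) x, 0 ≤ g t := by
      intro t ht
      have ht0 : (0:ℝ) < t := lt_trans one_pos ht.1
      have hlogt0 : 0 ≤ Real.log t := Real.log_nonneg ht.1.le
      show 0 ≤ ((q:ℝ)+1) * Real.log t ^ q * t⁻¹
      exact mul_nonneg (mul_nonneg (by positivity) (pow_nonneg hlogt0 q))
        (inv_nonneg.mpr ht0.le)
    have hgle : ∀ t ∈ Set.Ioc (1:ℝ) x, g t ≤ ((q:ℝ)+1) * Real.log x ^ q := by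
      intro t ht
      have ht0 : (0:ℝ) < t := lt_trans one_pos ht.1
      have hlogt0 : 0 ≤ Real.log t := Real.log_nonneg ht.1.le
      have hlt : Real.log t ≤ Real.log x := Real.log_le_log ht0 ht.2
      have hpow : Real.log t ^ q ≤ Real.log x ^ q := pow_le_pow_left₀ hlogt0 hlt q
      have hinv : t⁻¹ ≤ 1 := inv_le_one_of_one_le₀ ht.1.le
      calc g t = ((q:ℝ)+1) * Real.log t ^ q * t⁻¹ := rfl
        _ ≤ (((q:ℝ)+1) * Real.log x ^ q) * 1 := by
            apply mul_le_mul (mul_le_mul_of_nonneg_left hpow (by positivity)) hinv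
              (inv_nonneg.mpr ht0.le) (by positivity)
        _ = ((q:ℝ)+1) * Real.log x ^ q := mul_one _
    have hgS_int : MeasureTheory.IntegrableOn (fun t => g t * S t) (Set.Ioc 1 x) := by
      refine MeasureTheory.Integrable.mono'
        (g := fun _ => (((q:ℝ)+1) * Real.log x ^ q) * S x)
        (MeasureTheory.integrableOn_const measure_Ioc_lt_top.ne)
        ((hg_meas.mul hS_meas).aestronglyMeasurable) ?_
      refine (MeasureTheory.ae_restrict_iff' measurableSet_Ioc).mpr (Filter.Eventually.of_forall ?_)
      intro t ht
      have hS0 : 0 ≤ S t := Finset.sum_nonneg fun i _ => hcnn i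
      have hSle : S t ≤ S x := hS_mono ht.2
      rw [Real.norm_eq_abs, abs_of_nonneg (mul_nonneg (hg0 t ht) hS0)]
      exact mul_le_mul (hgle t ht) hSle hS0 (by positivity)
    have hgR_int : MeasureTheory.IntegrableOn
        (fun t => g t * (S t - Real.log t)) (Set.Ioc 1 x) := by
      have heq : (fun t => g t * (S t - Real.log t))
          = fun t => g t * S t - g t * Real.log t := funext fun t => by ring
      rw [heq]
      exact hgS_int.sub hglog_int
    -- split the integral
    have hI1 : (∫ t in Set.Ioc 1 x, deriv f t * S t)
        = ∫ t in Set.Ioc 1 x, g t * S t := by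
      refine MeasureTheory.setIntegral_congr_fun measurableSet_Ioc fun t ht => ?_
      rw [hderiv t (by have := ht.1; linarith)]
    have hsplit : (∫ t in Set.Ioc 1 x, g t * S t)
        = (∫ t in Set.Ioc 1 x, g t * Real.log t)
          + ∫ t in Set.Ioc 1 x, g t * (S t - Real.log t) := by
      rw [← MeasureTheory.integral_add hglog_int hgR_int]
      congr 1
      funext t
      ring
    -- main term
    have hmain : (∫ t in Set.Ioc 1 x, g t * Real.log t)
        = (((q:ℝ)+1)/((q:ℝ)+2)) * Real.log x ^ (q+2) := by
      have hne2 : ((q:ℝ)+2) ≠ 0 := by positivity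
      have h1 : (fun t => g t * Real.log t)
          = fun t => (((q:ℝ)+1)/((q:ℝ)+2)) * ((((q+1:ℕ):ℝ)+1) * Real.log t ^ (q+1) * t⁻¹) := by
        funext t
        calc g t * Real.log t = ((q:ℝ)+1) * Real.log t ^ (q+1) * t⁻¹ := by
              show (((q:ℝ)+1) * Real.log t ^ q * t⁻¹) * Real.log t = _
              ring
          _ = (((q:ℝ)+1)/((q:ℝ)+2)) * (((q:ℝ)+2) * Real.log t ^ (q+1) * t⁻¹) := by
              rw [← mul_assoc, ← mul_assoc, div_mul_cancel₀ _ hne2]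
          _ = (((q:ℝ)+1)/((q:ℝ)+2)) * ((((q+1:ℕ):ℝ)+1) * Real.log t ^ (q+1) * t⁻¹) := by
              push_cast; ring
      rw [h1, MeasureTheory.integral_const_mul, integral_pow_log (q+1) hx1]
    -- error term
    have herr : |∫ t in Set.Ioc 1 x, g t * (S t - Real.log t)| ≤ 81 * Real.log x ^ (q+1) := by
      have habs : |∫ t in Set.Ioc 1 x, g t * (S t - Real.log t)|
          ≤ ∫ t in Set.Ioc 1 x, |g t * (S t - Real.log t)| := by
        rw [← Real.norm_eq_abs]
        simpa only [Real.norm_eq_abs] using MeasureTheory.norm_integral_le_integral_norm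
          (fun t => g t * (S t - Real.log t))
      calc |∫ t in Set.Ioc 1 x, g t * (S t - Real.log t)|
          ≤ ∫ t in Set.Ioc 1 x, |g t * (S t - Real.log t)| := habs
        _ ≤ ∫ t in Set.Ioc 1 x, 81 * g t := by
            refine MeasureTheory.setIntegral_mono_on hgR_int.abs (hg_int.const_mul 81)
              measurableSet_Ioc fun t ht => ?_
            rw [abs_mul, abs_of_nonneg (hg0 t ht)]
            calc g t * |S t - Real.log t| ≤ g t * 81 :=
                mul_le_mul_of_nonneg_left (hSm t ht.1.le) (hg0 t ht)
              _ = 81 * g t := by ring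
        _ = 81 * ∫ t in Set.Ioc 1 x, g t := MeasureTheory.integral_const_mul 81 _
        _ = 81 * Real.log x ^ (q+1) := by
            rw [show (∫ t in Set.Ioc 1 x, g t)
              = ∫ t in Set.Ioc 1 x, ((q:ℝ)+1) * Real.log t ^ q * t⁻¹ from rfl,
              integral_pow_log q hx1]
    -- assemble
    set E := ∫ t in Set.Ioc 1 x, g t * (S t - Real.log t) with hEdef
    set Rx := S x - Real.log x with hRxdef
    have hRx : |Rx| ≤ 81 := hSm x hx1
    have hfx : f x = Real.log x ^ (q+1) := rfl
    have hS0N : (∑ k ∈ Finset.Icc 0 ⌊x⌋₊, c k) = S x := rfl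
    have h1 : (∑ n ∈ Finset.Icc 1 ⌊x⌋₊,
          ArithmeticFunction.vonMangoldt n * (Real.log n) ^ (q+1) / n)
        = Real.log x ^ (q+1) * (Real.log x + Rx)
          - ((((q:ℝ)+1)/((q:ℝ)+2)) * Real.log x ^ (q+2) + E) := by
      rw [hgoal_sum, habel, hS0N, hI1, hsplit, hmain, hfx, hRxdef, hEdef]
      ring
    rw [h1]
    have hcast : ((q+1:ℕ):ℝ) + 1 = (q:ℝ) + 2 := by push_cast; ring
    have hne2 : ((q:ℝ)+2) ≠ 0 := by positivity
    have h2 : Real.log x ^ (q+1) * (Real.log x + Rx)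
          - ((((q:ℝ)+1)/((q:ℝ)+2)) * Real.log x ^ (q+2) + E)
          - Real.log x ^ (q+1+1) / (((q+1:ℕ):ℝ) + 1)
        = Real.log x ^ (q+1) * Rx - E := by
      rw [hcast]
      field_simp
      ring
    rw [show (q+1+1 : ℕ) = q+2 from rfl] at h2
    rw [h2]
    have hP0 : 0 ≤ Real.log x ^ (q+1) := by positivity
    calc |Real.log x ^ (q+1) * Rx - E|
        ≤ |Real.log x ^ (q+1) * Rx| + |E| := abs_sub _ _
      _ ≤ Real.log x ^ (q+1) * 81 + 81 * Real.log x ^ (q+1) := by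
          refine add_le_add ?_ herr
          rw [abs_mul, abs_of_nonneg hP0]
          exact mul_le_mul_of_nonneg_left hRx hP0
      _ = 162 * Real.log x ^ (q+1) := by ring
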